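/- arXiv:1906.12053 — 2 statements merged into one kernel-verified Lean document; each statement's English description precedes it below -/
import Mathlib

section
/- Define b : ℕ → ℚ by b(2) = 0 and, for n ≥ 3, b(n) = 2(n-1)·b(n-1) + 3·(n·(2n-3)!/(2^{n-2}·(n-2)!) − 2^{n-1}·(n-1)!). Then for all n ≥ 2, b(n) = (n+2)·(2n)!/(2^n·n!) − 3·2^{n-1}·n!. -/
/-!
Since `(2m+1)! = 2^m m! (2m+1)‼`, both factorial quotients in the statement are odd double
factorials: `n (2n-3)! / (2^(n-2) (n-2)!) = n (2n-3)‼` and `(2n)! / (2^n n!) = (2n-1)‼`.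
In these terms the closed form is `(n+2)(2n-1)‼ - 3·2^(n-1) n!`, and the recurrence reduces to
`(2n-1)(n+2) = 2(n-1)(n+1) + 3n` for the double-factorial part and to `n! = (n-1)(n-1)! + (n-1)!`
for the other one; induction from `b 2 = 0` finishes.
-/

open Nat

lemma Nat.factorial_two_mul_add_one (m : ℕ) : (2 * m + 1)! = 2 ^ m * m ! * (2 * m + 1)‼ := by
  rw [factorial_eq_mul_doubleFactorial, doubleFactorial_two_mul, mul_comm]

lemma Nat.cast_factorial_two_mul_add_one_div (m : ℕ) :
    ((2 * m + 1)! : ℚ) / (2 ^ m * m !) = (2 * m + 1)‼ := by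
  rw [factorial_two_mul_add_one]
  push_cast
  field_simp

lemma Nat.cast_factorial_two_mul_add_two_div (m : ℕ) :
    ((2 * m + 2)! : ℚ) / (2 ^ (m + 1) * (m + 1)!) = (2 * m + 1)‼ := by
  rw [← cast_factorial_two_mul_add_one_div, factorial_succ (2 * m + 1), factorial_succ m]
  push_cast
  field_simp
  ring

def oneReticulationClosedForm (n : ℕ) : ℚ :=
  (n + 2 : ℚ) * (Nat.factorial (2 * n) : ℚ) / (2 ^ n * (Nat.factorial n)) -
    3 * 2 ^ (n - 1) * (Nat.factorial n : ℚ)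

lemma oneReticulationClosedForm_add_two (m : ℕ) :
    oneReticulationClosedForm (m + 2) = (m + 4) * (2 * m + 3)‼ - 3 * 2 ^ (m + 1) * (m + 2)! := by
  have h := cast_factorial_two_mul_add_two_div (m + 1)
  rw [show 2 * (m + 1) + 1 = 2 * m + 3 by ring] at h
  rw [oneReticulationClosedForm, mul_div_assoc, show 2 * (m + 2) = 2 * (m + 1) + 2 by ring, h]
  push_cast
  ring

lemma oneReticulationClosedForm_add_three (m : ℕ) :
    oneReticulationClosedForm (m + 3) = 2 * (m + 2) * oneReticulationClosedForm (m + 2) +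
      3 * ((m + 3) * (2 * m + 3)‼ - 2 ^ (m + 2) * (m + 2)!) := by
  rw [oneReticulationClosedForm_add_two, oneReticulationClosedForm_add_two,
    show 2 * (m + 1) + 3 = 2 * m + 3 + 2 by ring, doubleFactorial_add_two, factorial_succ (m + 2)]
  push_cast
  ring

theorem one_reticulation_normal_networks_closed_form (b : ℕ → ℚ)
    (h2 : b 2 = 0)
    (hrec : ∀ n : ℕ, 3 ≤ n →
      b n = 2 * (n - 1 : ℚ) * b (n - 1) +
        3 * ((n : ℚ) * (Nat.factorial (2 * n - 3) : ℚ) /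
            (2 ^ (n - 2) * (Nat.factorial (n - 2))) -
          2 ^ (n - 1) * (Nat.factorial (n - 1) : ℚ))) :
    ∀ n : ℕ, 2 ≤ n →
      b n = (n + 2 : ℚ) * (Nat.factorial (2 * n) : ℚ) / (2 ^ n * (Nat.factorial n)) -
        3 * 2 ^ (n - 1) * (Nat.factorial n : ℚ) := by
  have hrec' (m : ℕ) : b (m + 3) = 2 * (m + 2) * b (m + 2) +
      3 * ((m + 3) * (2 * m + 3)‼ - 2 ^ (m + 2) * (m + 2)!) := by
    rw [hrec (m + 3) (by omega), mul_div_assoc, show 2 * (m + 3) - 3 = 2 * (m + 1) + 1 by omega,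
      show m + 3 - 2 = m + 1 by omega, cast_factorial_two_mul_add_one_div,
      show 2 * (m + 1) + 1 = 2 * m + 3 by ring]
    push_cast
    ring
  intro n hn
  obtain ⟨m, rfl⟩ := Nat.exists_eq_add_of_le' hn
  change b (m + 2) = oneReticulationClosedForm (m + 2)
  induction m with
  | zero => norm_num [h2, oneReticulationClosedForm, factorial]
  | succ m ih => rw [hrec', ih, oneReticulationClosedForm_add_three]; push_cast
end

section
/- For all n ≥ 1, 3·2^{n-1}·∑_{k=1}^{n-1} (k+1)·C(2k,k)/2^{2k} − 3·2^{n-1}·(n-1) = (n+2)·(2n)!/(2^n·n!·(n-1)!) − 3·2^{n-1}·n, where the sums are over the rationals. -/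
/-!
With `c k = C(2k,k) / 4^k` one has `(k + 1) c (k + 1) = (2k + 1)/2 · c k`, which makes
`∑_{k ≤ m} (k + 1) c k = (m + 3)(2m + 1)/3 · c m` a one-step induction. The closed form on the
right of the identity is the same quantity, since `(2m + 2)! = 2(2m + 1) C(2m,m) (m + 1)! m!`.
-/

open Finset Nat

theorem sum_range_succ_mul_centralBinom_div_four_pow {K : Type*} [Field K] [CharZero K] (m : ℕ) :
    ∑ k ∈ range (m + 1), (k + 1 : K) * centralBinom k / 4 ^ k =
      (m + 3) * (2 * m + 1) / 3 * centralBinom m / 4 ^ m := by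
  induction m with
  | zero => norm_num
  | succ m ih =>
    have hrec : ((m + 1) * centralBinom (m + 1) : K) = 2 * (2 * m + 1) * centralBinom m := by
      exact_mod_cast succ_mul_centralBinom_succ m
    rw [sum_range_succ, ih, pow_succ]
    field_simp
    push_cast
    linear_combination (-2 * (m + 3) : K) * hrec

theorem sum_Icc_succ_mul_choose_div_two_pow {K : Type*} [Field K] [CharZero K] (m : ℕ) :
    ∑ k ∈ Icc 1 m, (k + 1 : K) * (2 * k).choose k / 2 ^ (2 * k) =
      (m + 3) * (2 * m + 1) / 3 * centralBinom m / 4 ^ m - 1 := by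
  rw [eq_sub_iff_add_eq', ← sum_range_succ_mul_centralBinom_div_four_pow, range_eq_Ico,
    sum_eq_sum_Ico_succ_bot (zero_lt_succ m), succ_eq_add_one, Ico_add_one_right_eq_Icc]
  norm_num [pow_mul, centralBinom_eq_two_mul_choose]

theorem centralBinom_mul_factorial_mul_factorial (n : ℕ) :
    centralBinom n * n ! * n ! = (2 * n)! := by
  simpa [centralBinom, two_mul] using
    choose_mul_factorial_mul_factorial (Nat.le_mul_of_pos_left n two_pos)

theorem factorial_two_mul_succ (m : ℕ) :
    (2 * (m + 1))! = 2 * (2 * m + 1) * centralBinom m * (m + 1)! * m ! := by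
  rw [← centralBinom_mul_factorial_mul_factorial, factorial_succ m]
  linear_combination ((m + 1) * m ! * m !) * succ_mul_centralBinom_succ m

theorem key_sum_identity_b (n : ℕ) (hn : 1 ≤ n) :
    3 * 2 ^ (n - 1) *
        (∑ k ∈ Finset.Icc 1 (n - 1),
          (k + 1 : ℚ) * (Nat.choose (2 * k) k : ℚ) / 2 ^ (2 * k)) -
      3 * 2 ^ (n - 1) * ((n : ℚ) - 1) =
    (n + 2 : ℚ) * (Nat.factorial (2 * n) : ℚ) /
        (2 ^ n * (Nat.factorial n) * (Nat.factorial (n - 1))) -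
      3 * 2 ^ (n - 1) * (n : ℚ) := by
  obtain ⟨m, rfl⟩ : ∃ m, n = m + 1 := ⟨n - 1, by omega⟩
  rw [add_tsub_cancel_right, sum_Icc_succ_mul_choose_div_two_pow, factorial_two_mul_succ,
    show (4 : ℚ) ^ m = 2 ^ m * 2 ^ m by rw [← mul_pow]; norm_num]
  push_cast
  field_simp
  ring
end
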